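/- arXiv:2205.14003 — 4 statements merged into one kernel-verified Lean document; each statement's English description precedes it below -/
import Mathlib

section
/- Let a group G act on a set X, let x₀ ∈ X be fixed by G, and let step : X × X → X and choice : X → Set X be G-equivariant (step(g·b, g·c) = g·step(b,c) and choice(g·b) = g·choice(b)). Define P to be the set of finite sequences (b₁,…,bₙ) with n ≥ 2, b₁ = x₀, bₙ₋₁ = bₙ, bᵢ₋₁ ≠ bᵢ for all 1 < i < n, and for each i < n there exists c ∈ choice(bᵢ) with bᵢ₊₁ = step(bᵢ, c). Suppose some (b₁*,…,bₖ*) ∈ P satisfies: for every i < k, choice(bᵢ*) is an orbit of the subgroup of G fixing each of b₁*,…,bᵢ* pointwise. Then P is an orbit of G under the coordinatewise action on sequences; in particular all sequences in P have the same length k. -/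
/-- `l` is a path of the iteration-with-choice process: `l = (b₁, …, bₙ)` with
`n ≥ 2`, `b₁ = x₀`, `bₙ₋₁ = bₙ`, `bᵢ₋₁ ≠ bᵢ` for all `1 < i < n`, and each
`bᵢ₊₁` is obtained as `step bᵢ c` for some `c ∈ choice bᵢ`. (0-based indexing.) -/
def IsWPath {X : Type*} (x₀ : X) (step : X → X → X) (choice : X → Set X)
    (l : List X) : Prop :=
  2 ≤ l.length ∧
  l[0]? = some x₀ ∧
  l[l.length - 2]? = l[l.length - 1]? ∧
  (∀ i, i + 2 < l.length → l[i]? ≠ l[i + 1]?) ∧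
  (∀ i, i + 1 < l.length →
    ∃ b c, l[i]? = some b ∧ c ∈ choice b ∧ l[i + 1]? = some (step b c))

/-- The path `l` is witnessed: for every index `i` with `i + 1 < l.length`,
the choice set of `l[i]` is an orbit of the subgroup of `G` fixing
`l[0], …, l[i]` pointwise. -/
def Witnessed (G : Type*) {X : Type*} [Group G] [MulAction G X]
    (choice : X → Set X) (l : List X) : Prop :=
  ∀ i, i + 1 < l.length → ∀ b, l[i]? = some b → ∀ c ∈ choice b,
    choice b = {d | ∃ g : G, (∀ j ≤ i, ∀ x, l[j]? = some x → g • x = x) ∧ d = g • c}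

/-!
Paths are closed under the action of `G` because `x₀`, `step` and `choice` are equivariant.
Conversely, given a witnessed path `p` and any path `q`, one builds by induction on `i` an
element `g` with `g • p` and `q` agreeing on their first `i` entries: if `g` works up to `i`,
then `q[i+1] = step (g • p[i]) (g • c')` with `c'` in `choice p[i]`, which by the witness
property is `h • c` for some `h` fixing `p[0], …, p[i]`, so `g * h` works up to `i + 1`.
Finally, two paths agreeing on their common indices are equal: a path stops exactly at its
first repeated entry.
-/

namespace IsWPath

variable {G X : Type*} [Group G] [MulAction G X] {x₀ : X} {step : X → X → X}
  {choice : X → Set X} {p q : List X}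

theorem map_smul (hx₀ : ∀ g : G, g • x₀ = x₀)
    (hstep : ∀ (g : G) (b c : X), step (g • b) (g • c) = g • step b c)
    (hchoice : ∀ (g : G) (b : X), choice (g • b) = (fun c => g • c) '' choice b)
    (hp : IsWPath x₀ step choice p) (g : G) :
    IsWPath x₀ step choice (p.map (g • ·)) := by
  obtain ⟨hlen, hp0, hend, hne, hsteps⟩ := hp
  refine ⟨by simpa using hlen, by simp [hp0, hx₀], by simp [hend], fun i hi h => ?_,
    fun i hi => ?_⟩
  · simp only [List.length_map, List.getElem?_map] at hi h
    exact hne i hi (Option.map_injective (MulAction.injective g) h)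
  · rw [List.length_map] at hi
    obtain ⟨b, c, hb, hc, hbc⟩ := hsteps i hi
    exact ⟨g • b, g • c, by simp [hb], by rw [hchoice]; exact Set.mem_image_of_mem _ hc,
      by simp [hbc, hstep]⟩

theorem le_length_of_getElem?_eq (hp : IsWPath x₀ step choice p)
    (hq : IsWPath x₀ step choice q)
    (hpq : ∀ j < min p.length q.length, p[j]? = q[j]?) : p.length ≤ q.length := by
  by_contra! hlt
  obtain ⟨hqlen, -, hqend, -, -⟩ := hq
  have hsucc : q.length - 2 + 1 = q.length - 1 := by omega
  refine hp.2.2.2.1 (q.length - 2) (by omega) ?_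
  rw [hpq _ (by omega), hsucc, hpq _ (by omega), hqend]

theorem eq_of_getElem?_eq (hp : IsWPath x₀ step choice p) (hq : IsWPath x₀ step choice q)
    (hpq : ∀ j < min p.length q.length, p[j]? = q[j]?) : p = q := by
  have hqp : ∀ j < min q.length p.length, q[j]? = p[j]? := fun j hj =>
    (hpq j (min_comm q.length p.length ▸ hj)).symm
  have hlen : p.length = q.length :=
    le_antisymm (hp.le_length_of_getElem?_eq hq hpq) (hq.le_length_of_getElem?_eq hp hqp)
  refine List.ext_getElem? fun j => ?_
  rcases lt_or_ge j p.length with hj | hj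
  · exact hpq j (by omega)
  · rw [List.getElem?_eq_none hj, List.getElem?_eq_none (hlen ▸ hj)]

theorem exists_smul_getElem?_eq_succ
    (hstep : ∀ (g : G) (b c : X), step (g • b) (g • c) = g • step b c)
    (hchoice : ∀ (g : G) (b : X), choice (g • b) = (fun c => g • c) '' choice b)
    (hp : IsWPath x₀ step choice p) (hq : IsWPath x₀ step choice q)
    (hw : Witnessed G choice p) {i : ℕ} (hip : i + 1 < p.length) (hiq : i + 1 < q.length)
    {g : G} (hg : ∀ j ≤ i, (p.map (g • ·))[j]? = q[j]?) :
    ∃ g' : G, ∀ j ≤ i + 1, (p.map (g' • ·))[j]? = q[j]? := by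
  obtain ⟨b, c, hpb, hc, hpc⟩ := hp.2.2.2.2 i hip
  obtain ⟨b', c', hqb, hc', hqc⟩ := hq.2.2.2.2 i hiq
  obtain rfl : b' = g • b := by simpa [hpb, hqb] using (hg i le_rfl).symm
  rw [hchoice] at hc'
  obtain ⟨c₂, hc₂, rfl⟩ := hc'
  rw [hw i hip b hpb c hc] at hc₂
  obtain ⟨h, hfix, rfl⟩ := hc₂
  refine ⟨g * h, fun j hj => ?_⟩
  rcases hj.lt_or_eq with hj | rfl
  · rw [← hg j (by omega), List.getElem?_map, List.getElem?_map]
    cases hx : p[j]? with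
    | none => rfl
    | some x => simp [mul_smul, hfix j (by omega) x hx]
  · have hstep_h : step b (h • c) = h • step b c := by rw [← hstep, hfix i le_rfl b hpb]
    simp [hpc, hqc, hstep, hstep_h, mul_smul]

theorem exists_smul_getElem?_eq
    (hstep : ∀ (g : G) (b c : X), step (g • b) (g • c) = g • step b c)
    (hchoice : ∀ (g : G) (b : X), choice (g • b) = (fun c => g • c) '' choice b)
    (hp : IsWPath x₀ step choice p) (hq : IsWPath x₀ step choice q)
    (hw : Witnessed G choice p) :
    ∀ i < min p.length q.length, ∃ g : G, ∀ j ≤ i, (p.map (g • ·))[j]? = q[j]?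
  | 0, _ => ⟨1, fun j hj => by
      obtain rfl : j = 0 := by omega
      simp [hp.2.1, hq.2.1]⟩
  | i + 1, hi => by
      obtain ⟨g, hg⟩ := exists_smul_getElem?_eq hstep hchoice hp hq hw i (by omega)
      exact hp.exists_smul_getElem?_eq_succ hstep hchoice hq hw (by omega) (by omega) hg

end IsWPath

/-- Witnessed-path lemma: if some path of the iteration-with-choice process is
witnessed, then the set of all paths is an orbit of `G` under the coordinatewise
action on sequences; in particular all paths have the same length. -/
theorem witnessed_path_orbit {G X : Type*} [Group G] [MulAction G X]
    (x₀ : X) (hx₀ : ∀ g : G, g • x₀ = x₀)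
    (step : X → X → X) (choice : X → Set X)
    (hstep : ∀ (g : G) (b c : X), step (g • b) (g • c) = g • step b c)
    (hchoice : ∀ (g : G) (b : X), choice (g • b) = (fun c => g • c) '' choice b)
    (p : List X) (hp : IsWPath x₀ step choice p) (hw : Witnessed G choice p) :
    (∀ q : List X, IsWPath x₀ step choice q ↔ ∃ g : G, q = p.map (fun x => g • x)) ∧
    (∀ q : List X, IsWPath x₀ step choice q → q.length = p.length) := by
  have horbit : ∀ q : List X, IsWPath x₀ step choice q ↔ ∃ g : G, q = p.map (fun x => g • x) := by
    refine fun q => ⟨fun hq => ?_, fun ⟨g, hg⟩ => hg ▸ hp.map_smul hx₀ hstep hchoice g⟩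
    have hmin : 0 < min p.length q.length := lt_min (by linarith [hp.1]) (by linarith [hq.1])
    obtain ⟨g, hg⟩ := hp.exists_smul_getElem?_eq hstep hchoice hq hw _ (Nat.sub_one_lt hmin.ne')
    refine ⟨g, (IsWPath.eq_of_getElem?_eq (hp.map_smul hx₀ hstep hchoice g) hq ?_).symm⟩
    intro j hj
    exact hg j (by simp only [List.length_map] at hj; omega)
  refine ⟨horbit, fun q hq => ?_⟩
  obtain ⟨g, rfl⟩ := (horbit q).mp hq
  exact List.length_map _
end

section
/- In the setting of the witnessed-path lemma, if one sequence (b₁*,…,bₖ*) ∈ P is witnessed (for every i < k, choice(bᵢ*) is an orbit of the pointwise stabilizer of (b₁*,…,bᵢ*)), then every sequence (b₁,…,bₖ) ∈ P is witnessed: for every i < k, choice(bᵢ) is an orbit of the pointwise stabilizer of (b₁,…,bᵢ). -/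
/-!
Fix a witnessed path `p` and any path `q`. Inductively, for every common index `i` some `g ∈ G`
carries `p[0], …, p[i]` to `q[0], …, q[i]`: by equivariance of `choice`, `q`'s choice at step `i`
is the `g`-image of an element of `choice p[i]`, which is the orbit of `p`'s own choice under the
fixer of `p[0], …, p[i]`; correcting `g` by that fixer element and using equivariance of `step`
makes it carry the next entries too. Such a `g` conjugates the fixers of the two prefixes, so it
transports the orbit description of `choice p[i]` to `choice q[i]`. And `q` is no longer than `p`,
since `g` would carry the repeated last entry of `p` to two distinct consecutive entries of `q`.
-/

section PrefixAction

variable {G X : Type*} [Group G] [MulAction G X] {g h : G} {l l' : List X} {i : ℕ}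

def FixesPrefix (g : G) (l : List X) (i : ℕ) : Prop :=
  ∀ j ≤ i, ∀ x, l[j]? = some x → g • x = x

def MapsPrefix (g : G) (l l' : List X) (i : ℕ) : Prop :=
  ∀ j ≤ i, l'[j]? = l[j]?.map (g • ·)

theorem MapsPrefix.fixesPrefix_conj_iff (hg : MapsPrefix g l l' i) :
    FixesPrefix (g * h * g⁻¹) l' i ↔ FixesPrefix h l i := by
  refine forall₂_congr fun j hj => ?_
  rw [hg j hj]
  cases l[j]? with
  | none => simp
  | some x => simp [mul_smul]

theorem MapsPrefix.image_orbit (hg : MapsPrefix g l l' i) (c : X) :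
    (g • ·) '' {d | ∃ h : G, FixesPrefix h l i ∧ d = h • c} =
      {d | ∃ k : G, FixesPrefix k l' i ∧ d = k • g • c} := by
  ext d
  constructor
  · rintro ⟨_, ⟨h, hh, rfl⟩, rfl⟩
    exact ⟨g * h * g⁻¹, hg.fixesPrefix_conj_iff.2 hh, by simp [mul_smul]⟩
  · rintro ⟨k, hk, rfl⟩
    have hconj : FixesPrefix (g⁻¹ * k * g) l i := by
      rw [← hg.fixesPrefix_conj_iff]
      simpa [mul_assoc] using hk
    exact ⟨(g⁻¹ * k * g) • c, ⟨_, hconj, rfl⟩, by simp [mul_smul]⟩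

theorem MapsPrefix.mul_of_fixesPrefix (hg : MapsPrefix g l l' i) (hh : FixesPrefix h l i) :
    MapsPrefix (g * h) l l' i := by
  intro j hj
  rw [hg j hj]
  cases hx : l[j]? with
  | none => rfl
  | some x => simp [mul_smul, hh j hj x hx]

theorem MapsPrefix.succ (hg : MapsPrefix g l l' i) (hnext : l'[i + 1]? = l[i + 1]?.map (g • ·)) :
    MapsPrefix g l l' (i + 1) := by
  intro j hj
  rcases Nat.le_succ_iff.1 hj with hj | rfl
  exacts [hg j hj, hnext]

end PrefixAction

section Paths

variable {G X : Type*} [Group G] [MulAction G X] {x₀ : X} {step : X → X → X}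
  {choice : X → Set X} {p q : List X}

theorem IsWPath.exists_mapsPrefix
    (hstep : ∀ (g : G) (b c : X), step (g • b) (g • c) = g • step b c)
    (hchoice : ∀ (g : G) (b : X), choice (g • b) = (fun c => g • c) '' choice b)
    (hp : IsWPath x₀ step choice p) (hw : Witnessed G choice p) (hq : IsWPath x₀ step choice q) :
    ∀ i < p.length, i < q.length → ∃ g : G, MapsPrefix g p q i := by
  intro i
  induction i with
  | zero =>
    intro _ _
    refine ⟨1, fun j hj => ?_⟩
    obtain rfl : j = 0 := Nat.le_zero.1 hj
    simp [hp.2.1, hq.2.1]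
  | succ i ih =>
    intro hip hiq
    obtain ⟨g, hg⟩ := ih (by omega) (by omega)
    obtain ⟨bp, cp, hbp, hcp, hnextp⟩ := hp.2.2.2.2 i hip
    obtain ⟨bq, cq, hbq, hcq, hnextq⟩ := hq.2.2.2.2 i hiq
    have hgb : bq = g • bp := by simpa [hbp, hbq] using hg i le_rfl
    rw [hgb, hchoice] at hcq
    obtain ⟨cp', hcp', rfl⟩ := hcq
    rw [hw i hip bp hbp cp hcp] at hcp'
    obtain ⟨h, hh, rfl⟩ := hcp'
    refine ⟨g * h, (hg.mul_of_fixesPrefix hh).succ ?_⟩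
    have hhb : h • bp = bp := hh i le_rfl bp hbp
    rw [hnextq, hnextp, hgb, Option.map_some, ← hstep, mul_smul, mul_smul, hhb]

theorem IsWPath.length_le_of_mapsPrefix {g : G} (hp : IsWPath x₀ step choice p)
    (hq : IsWPath x₀ step choice q) (hg : MapsPrefix g p q (p.length - 1)) :
    q.length ≤ p.length := by
  by_contra! hlt
  have hlen := hp.1
  apply hq.2.2.2.1 (p.length - 2) (by omega)
  rw [show p.length - 2 + 1 = p.length - 1 by omega, hg _ (by omega), hg _ le_rfl, hp.2.2.1]

theorem IsWPath.length_le_of_witnessed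
    (hstep : ∀ (g : G) (b c : X), step (g • b) (g • c) = g • step b c)
    (hchoice : ∀ (g : G) (b : X), choice (g • b) = (fun c => g • c) '' choice b)
    (hp : IsWPath x₀ step choice p) (hw : Witnessed G choice p) (hq : IsWPath x₀ step choice q) :
    q.length ≤ p.length := by
  by_contra! hlt
  have hp₂ := hp.1
  obtain ⟨g, hg⟩ := hp.exists_mapsPrefix hstep hchoice hw hq (p.length - 1) (by omega) (by omega)
  exact hlt.not_ge (hp.length_le_of_mapsPrefix hq hg)

theorem Witnessed.choice_eq_of_mapsPrefix {g : G} {i : ℕ} {b c : X}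
    (hchoice : ∀ (g : G) (b : X), choice (g • b) = (fun c => g • c) '' choice b)
    (hw : Witnessed G choice p) (hi : i + 1 < p.length) (hg : MapsPrefix g p q i)
    (hb : q[i]? = some b) (hc : c ∈ choice b) :
    choice b = {d | ∃ k : G, FixesPrefix k q i ∧ d = k • c} := by
  obtain ⟨bp, hbp⟩ : ∃ bp, p[i]? = some bp := ⟨p[i], List.getElem?_eq_getElem (by omega)⟩
  obtain rfl : b = g • bp := by simpa [hbp, hb] using hg i le_rfl
  rw [hchoice] at hc ⊢
  obtain ⟨c₀, hc₀, rfl⟩ := hc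
  rw [hw i hi bp hbp c₀ hc₀]
  exact hg.image_orbit c₀

end Paths

theorem witnessed_all_or_none_general {G X : Type*} [Group G] [MulAction G X]
    (x₀ : X)
    (step : X → X → X) (choice : X → Set X)
    (hstep : ∀ (g : G) (b c : X), step (g • b) (g • c) = g • step b c)
    (hchoice : ∀ (g : G) (b : X), choice (g • b) = (fun c => g • c) '' choice b)
    (p : List X) (hp : IsWPath x₀ step choice p) (hw : Witnessed G choice p) :
    ∀ q : List X, IsWPath x₀ step choice q → Witnessed G choice q := by
  intro q hq i hi b hb c hc
  have hlen := hp.length_le_of_witnessed hstep hchoice hw hq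
  obtain ⟨g, hg⟩ := hp.exists_mapsPrefix hstep hchoice hw hq i (by omega) (by omega)
  exact hw.choice_eq_of_mapsPrefix hchoice (by omega) hg hb hc

/-- If one path of the iteration-with-choice process is witnessed, then every
path is witnessed. -/
theorem witnessed_all_or_none {G X : Type*} [Group G] [MulAction G X]
    (x₀ : X) (hx₀ : ∀ g : G, g • x₀ = x₀)
    (step : X → X → X) (choice : X → Set X)
    (hstep : ∀ (g : G) (b c : X), step (g • b) (g • c) = g • step b c)
    (hchoice : ∀ (g : G) (b : X), choice (g • b) = (fun c => g • c) '' choice b)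
    (p : List X) (hp : IsWPath x₀ step choice p) (hw : Witnessed G choice p) :
    ∀ q : List X, IsWPath x₀ step choice q → Witnessed G choice q :=
  witnessed_all_or_none_general x₀ step choice hstep hchoice p hp hw
end

section
/- Let G = (V,E) be a finite simple graph, g : E → F₂, and let e₁, e₂ ∈ E be two distinct edges sharing a common vertex. Define g' : E → F₂ by flipping g exactly on e₁ and e₂ (g'(e) = g(e)+1 for e ∈ {e₁,e₂}, g'(e) = g(e) otherwise). Then the CFI graphs CFI(G,g) and CFI(G,g') are isomorphic. -/
/-- Gadget vertices of the CFI graph over a base graph `G`: pairs `(u, a)` where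
`u` is a base vertex and `a : N(u) → 𝔽₂` has sum `0` over the neighborhood of
`u` (encoded as a function on all of `V` vanishing outside `N(u)`). -/
def CFIGadgetV {V : Type*} [Fintype V] (G : SimpleGraph V) :=
  {p : V × (V → ZMod 2) // (∀ w, ¬ G.Adj p.1 w → p.2 w = 0) ∧ ∑ w, p.2 w = 0}

/-- Edge vertices of the CFI graph over a base graph `G`: triples `(u, v, i)`
where `(u, v)` is an ordered pair with `{u,v}` an edge of `G` and `i ∈ 𝔽₂`. -/
def CFIEdgeV {V : Type*} (G : SimpleGraph V) :=
  {q : V × V × ZMod 2 // G.Adj q.1 q.2.1}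

/-- The CFI graph `CFI(G, g)` of a base graph `G` with respect to
`g : E(G) → 𝔽₂`: a gadget vertex `(u, a)` is adjacent to an edge vertex
`(u, v, i)` whenever `a v = i`, and edge vertices `(u, v, i)` and `(v, u, j)`
are adjacent whenever `i + j = g {u, v}`. -/
def CFIGraph {V : Type*} [Fintype V] (G : SimpleGraph V) (g : Sym2 V → ZMod 2) :
    SimpleGraph (CFIGadgetV G ⊕ CFIEdgeV G) :=
  SimpleGraph.fromRel (fun x y =>
    (∃ (p : CFIGadgetV G) (q : CFIEdgeV G),
        x = Sum.inl p ∧ y = Sum.inr q ∧ p.1.1 = q.1.1 ∧ p.1.2 q.1.2.1 = q.1.2.2) ∨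
    (∃ q q' : CFIEdgeV G,
        x = Sum.inr q ∧ y = Sum.inr q' ∧ q.1.1 = q'.1.2.1 ∧ q.1.2.1 = q'.1.1 ∧
        q.1.2.2 + q'.1.2.2 = g (Sym2.mk q.1.1 q.1.2.1)))

/-!
Translating every gadget label `a` at a vertex `x` by a fixed gadget label `t x`, and every edge
vertex `(x, y, i)` to `(x, y, i + t x y)`, is an involution of the vertex set. It preserves
gadget–edge adjacency, and it changes the condition `i + j = g {x, y}` between edge vertices into
`i + j = g {x, y} + t x y + t y x`; hence `CFI(G, g) ≅ CFI(G, g')` whenever `g' - g` is the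
coboundary of such a `t`. The flip of `g` on `{u, v}` and `{u, w}` is the coboundary of the `t`
with `t u = 𝟙_v + 𝟙_w` and `t x = 0` for `x ≠ u`, and `t u` is a gadget label because
`1 + 1 = 0`.
-/

section Twist

variable {V : Type*} {G : SimpleGraph V}

namespace CFIEdgeV

def shift (t : V → V → ZMod 2) (q : CFIEdgeV G) : CFIEdgeV G :=
  ⟨(q.1.1, q.1.2.1, q.1.2.2 + t q.1.1 q.1.2.1), q.2⟩

@[simp]
theorem shift_val (t : V → V → ZMod 2) (q : CFIEdgeV G) :
    (q.shift t).1 = (q.1.1, q.1.2.1, q.1.2.2 + t q.1.1 q.1.2.1) := rfl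

theorem shift_involutive (t : V → V → ZMod 2) : Function.Involutive (shift (G := G) t) :=
  fun q => Subtype.ext <| Prod.ext rfl <| Prod.ext rfl <|
    CharTwo.add_cancel_right q.1.2.2 (t q.1.1 q.1.2.1)

end CFIEdgeV

section Fintype

variable [Fintype V]

/-- `t x` is a gadget label at `x` for every vertex `x`. -/
def IsCFITwist (G : SimpleGraph V) (t : V → V → ZMod 2) : Prop :=
  ∀ x, (∀ y, ¬ G.Adj x y → t x y = 0) ∧ ∑ y, t x y = 0

namespace CFIGadgetV

def shift {t : V → V → ZMod 2} (ht : IsCFITwist G t) (p : CFIGadgetV G) : CFIGadgetV G :=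
  ⟨(p.1.1, p.1.2 + t p.1.1), fun y hy => by simp [p.2.1 y hy, (ht _).1 y hy],
    by simp [Finset.sum_add_distrib, p.2.2, (ht _).2]⟩

@[simp]
theorem shift_val {t : V → V → ZMod 2} (ht : IsCFITwist G t) (p : CFIGadgetV G) :
    (p.shift ht).1 = (p.1.1, p.1.2 + t p.1.1) := rfl

theorem shift_involutive {t : V → V → ZMod 2} (ht : IsCFITwist G t) :
    Function.Involutive (shift ht) := fun p =>
  Subtype.ext <| Prod.ext rfl <| funext fun y => CharTwo.add_cancel_right (p.1.2 y) (t p.1.1 y)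

end CFIGadgetV

namespace CFIGraph

variable (g g' : Sym2 V → ZMod 2) {t : V → V → ZMod 2}

theorem not_adj_inl_inl (p p' : CFIGadgetV G) : ¬ (CFIGraph G g).Adj (.inl p) (.inl p') := by
  simp [CFIGraph]

theorem adj_inl_inr (p : CFIGadgetV G) (q : CFIEdgeV G) :
    (CFIGraph G g).Adj (.inl p) (.inr q) ↔ p.1.1 = q.1.1 ∧ p.1.2 q.1.2.1 = q.1.2.2 := by
  simp [CFIGraph]

theorem adj_inr_inr (q q' : CFIEdgeV G) :
    (CFIGraph G g).Adj (.inr q) (.inr q') ↔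
      q.1.1 = q'.1.2.1 ∧ q.1.2.1 = q'.1.1 ∧ q.1.2.2 + q'.1.2.2 = g s(q.1.1, q.1.2.1) := by
  simp only [CFIGraph, SimpleGraph.fromRel_adj, Sum.inr.injEq, reduceCtorEq, false_and,
    exists_false, false_or, exists_and_left, exists_eq_left', ne_eq]
  refine ⟨fun ⟨_, h⟩ => h.elim id fun ⟨h₁, h₂, h₃⟩ =>
    ⟨h₂.symm, h₁.symm, by rw [add_comm, h₃, h₁, h₂, Sym2.eq_swap]⟩, fun h => ⟨?_, .inl h⟩⟩
  rintro rfl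
  exact q.2.ne h.1

theorem adj_inl_inr_shift (ht : IsCFITwist G t) (p : CFIGadgetV G) (q : CFIEdgeV G) :
    (CFIGraph G g').Adj (.inl (p.shift ht)) (.inr (q.shift t)) ↔
      (CFIGraph G g).Adj (.inl p) (.inr q) := by
  simp only [adj_inl_inr, CFIGadgetV.shift_val, CFIEdgeV.shift_val, Pi.add_apply]
  exact and_congr_right fun h => by rw [h, add_left_inj]

theorem adj_inr_inr_shift (hg' : ∀ x y, G.Adj x y → g' s(x, y) = g s(x, y) + t x y + t y x)
    (q q' : CFIEdgeV G) :
    (CFIGraph G g').Adj (.inr (q.shift t)) (.inr (q'.shift t)) ↔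
      (CFIGraph G g).Adj (.inr q) (.inr q') := by
  simp only [adj_inr_inr, CFIEdgeV.shift_val, hg' _ _ q.2]
  refine and_congr_right fun h₁ => and_congr_right fun h₂ => ?_
  rw [h₁, h₂]
  constructor <;> intro h <;> linear_combination h

def twistIso (ht : IsCFITwist G t)
    (hg' : ∀ x y, G.Adj x y → g' s(x, y) = g s(x, y) + t x y + t y x) :
    CFIGraph G g ≃g CFIGraph G g' where
  toEquiv := (CFIGadgetV.shift_involutive ht).toPerm.sumCongr (CFIEdgeV.shift_involutive t).toPerm
  map_rel_iff' := by
    rintro (p | q) (p' | q') <;>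
      simp only [Equiv.sumCongr_apply, Sum.map_inl, Sum.map_inr, Function.Involutive.coe_toPerm]
    · exact iff_of_false (not_adj_inl_inl g' _ _) (not_adj_inl_inl g _ _)
    · exact adj_inl_inr_shift g g' ht p q'
    · rw [(CFIGraph G g').adj_comm, (CFIGraph G g).adj_comm]
      exact adj_inl_inr_shift g g' ht p' q
    · exact adj_inr_inr_shift g g' hg' q q'

end CFIGraph

end Fintype

section TwoDarts

variable [DecidableEq V] {u v w : V}

variable (u v w) in
def twoDartTwist : V → V → ZMod 2 :=
  Pi.single u (Pi.single v 1 + Pi.single w 1)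

theorem isCFITwist_twoDartTwist [Fintype V] (hv : G.Adj u v) (hw : G.Adj u w) :
    IsCFITwist G (twoDartTwist u v w) := by
  intro x
  by_cases hx : x = u
  · subst hx
    refine ⟨fun y hy => ?_, ?_⟩
    · have hyv : y ≠ v := by rintro rfl; exact hy hv
      have hyw : y ≠ w := by rintro rfl; exact hy hw
      simp [twoDartTwist, hyv, hyw]
    · simp [twoDartTwist, Finset.sum_add_distrib, CharTwo.add_self_eq_zero]
  · simp [twoDartTwist, hx]

theorem twoDartTwist_add_swap (hvw : v ≠ w) {x y : V} (hxy : x ≠ y) :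
    twoDartTwist u v w x y + twoDartTwist u v w y x =
      if s(x, y) = s(u, v) ∨ s(x, y) = s(u, w) then 1 else 0 := by
  have hpair (a : V) : (Pi.single v 1 + Pi.single w 1 : V → ZMod 2) a =
      if a = v ∨ a = w then 1 else 0 := by
    by_cases a = v <;> simp_all [Pi.single_apply]
  by_cases hx : x = u
  · subst hx
    simp [twoDartTwist, hxy.symm, hpair]
  by_cases hy : y = u
  · subst hy
    simp [twoDartTwist, hx, hpair, Sym2.eq_swap (a := x)]
  · simp [twoDartTwist, hx, hy]

end TwoDarts

end Twist

/-- Flipping the edge-labeling `g` of a CFI graph on two distinct edges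
`{u,v}` and `{u,w}` sharing the common vertex `u` yields an isomorphic CFI
graph. -/
theorem cfi_flip_two_incident_edges_iso {V : Type*} [Fintype V] [DecidableEq V]
    (G : SimpleGraph V) (u v w : V) (hv : G.Adj u v) (hw : G.Adj u w)
    (hvw : v ≠ w) (g g' : Sym2 V → ZMod 2)
    (hg' : ∀ e, g' e =
      if e = Sym2.mk u v ∨ e = Sym2.mk u w then g e + 1 else g e) :
    Nonempty (CFIGraph G g ≃g CFIGraph G g') := by
  refine ⟨CFIGraph.twistIso g g' (isCFITwist_twoDartTwist hv hw) fun x y hxy => ?_⟩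
  rw [hg', add_assoc, twoDartTwist_add_swap hvw hxy.ne]
  split_ifs <;> simp
end

section
/- Let a finite group G act on a finite set A. Suppose s assigns to each duplicate-free tuple ā over A that does not enumerate all of A a set s(ā) ⊆ A disjoint from the entries of ā, such that s(ā) is an orbit of the pointwise stabilizer G_ā and s is G-equivariant (s(g·ā) = g·s(ā)). Define Labels(ā) recursively: Labels(ā) = {ā} if ā enumerates all of A, and Labels(ā) = ⋃_{u ∈ s(ā)} Labels(āu) otherwise (āu denotes appending u). Then for every duplicate-free tuple ā, Labels(ā) is an orbit of the pointwise stabilizer G_ā acting coordinatewise on tuples. -/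
/-!
Both `Labels ā` and the `G_ā`-orbits are built by extending a duplicate-free tuple one entry at a
time, so everything goes by induction on the number of elements of `A` missing from `ā`.
Equivariance of `s` propagates to `Labels`: `Labels (g • ā) = g • Labels ā`. Hence, if
`s ā = G_ā • u` and `Labels (ā u) = G_{ā u} • m`, then
`Labels ā = ⋃_{g ∈ G_ā} g • Labels (ā u) = ⋃_{g ∈ G_ā} g G_{ā u} • m = G_ā • m`,
the last step because `G_{ā u} ≤ G_ā`.
-/

open Set

section

variable {G A : Type*} [Group G] [MulAction G A]

theorem List.map_smul_eq_self {g : G} {l : List A} (h : ∀ a ∈ l, g • a = a) :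
    l.map (g • ·) = l :=
  (List.map_congr_left h).trans l.map_id

theorem List.forall_mem_map_smul_iff (g : G) (l : List A) :
    (∀ a, a ∈ l.map (g • ·)) ↔ ∀ a, a ∈ l := by
  simp only [List.mem_map]
  refine ⟨fun h a => ?_, fun h a => ⟨g⁻¹ • a, h _, smul_inv_smul g a⟩⟩
  obtain ⟨b, hb, hba⟩ := h (g • a)
  rwa [← MulAction.injective g hba]

theorem List.Nodup.length_lt_card [Fintype A] {l : List A} (hl : l.Nodup)
    (hfull : ¬∀ a, a ∈ l) : l.length < Fintype.card A := by
  classical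
  obtain ⟨a, ha⟩ := not_forall.mp hfull
  rw [← List.toFinset_card_of_nodup hl]
  exact Finset.card_lt_univ_of_notMem (by simpa using ha)

@[elab_as_elim]
theorem List.Nodup.snoc_induction [Fintype A] {P : List A → Prop}
    (full : ∀ l : List A, (∀ a, a ∈ l) → P l)
    (snoc : ∀ l : List A, l.Nodup → ¬(∀ a, a ∈ l) → (∀ u ∉ l, P (l ++ [u])) → P l)
    (l : List A) (hl : l.Nodup) : P l := by
  by_cases hfull : ∀ a, a ∈ l
  · exact full l hfull
  · refine snoc l hl hfull fun u hu => List.Nodup.snoc_induction full snoc (l ++ [u]) ?_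
    exact List.concat_eq_append ▸ hl.concat hu
termination_by Fintype.card A - l.length
decreasing_by
  have := hl.length_lt_card hfull
  simp only [List.length_append, List.length_singleton]
  omega

variable (G) in
def pointwiseStabilizer (l : List A) : Set G :=
  {g | ∀ a ∈ l, g • a = a}

variable (G) in
def fixingOrbit (l m : List A) : Set (List A) :=
  {m' | ∃ g ∈ pointwiseStabilizer G l, m' = m.map (g • ·)}

theorem fixingOrbit_self (l : List A) : fixingOrbit G l l = {l} := by
  ext m'
  refine ⟨fun ⟨g, hg, hm'⟩ => hm'.trans (List.map_smul_eq_self hg), fun hm' => ?_⟩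
  exact ⟨1, fun a _ => one_smul G a, by simp [mem_singleton_iff.mp hm']⟩

theorem biUnion_image_fixingOrbit {l l' : List A} (hsub : l ⊆ l') (m : List A) :
    ⋃ g ∈ pointwiseStabilizer G l, List.map (g • ·) '' fixingOrbit G l' m =
      fixingOrbit G l m := by
  ext m'
  simp only [fixingOrbit, pointwiseStabilizer, mem_iUnion, mem_image, mem_ofPred_eq, exists_prop]
  constructor
  · rintro ⟨g, hg, _, ⟨h, hh, rfl⟩, rfl⟩
    refine ⟨g * h, fun a ha => ?_, ?_⟩
    · rw [mul_smul, hh a (hsub ha), hg a ha]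
    · simp [List.map_map, Function.comp_def, mul_smul]
  · rintro ⟨g, hg, rfl⟩
    exact ⟨g, hg, m, ⟨1, fun a _ => one_smul G a, by simp⟩, rfl⟩

theorem labels_map_smul [Fintype A] (s : List A → Set A)
    (hdisj : ∀ l : List A, l.Nodup → ¬(∀ a : A, a ∈ l) → ∀ u ∈ s l, u ∉ l)
    (hequiv : ∀ (g : G) (l : List A), l.Nodup → ¬(∀ a : A, a ∈ l) →
      s (l.map (fun a => g • a)) = (fun a => g • a) '' s l)
    (Labels : List A → Set (List A))
    (hL1 : ∀ l : List A, (∀ a : A, a ∈ l) → Labels l = {l})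
    (hL2 : ∀ l : List A, ¬(∀ a : A, a ∈ l) →
      Labels l = ⋃ u ∈ s l, Labels (l ++ [u]))
    (g : G) (l : List A) (hl : l.Nodup) :
    Labels (l.map (g • ·)) = List.map (g • ·) '' Labels l := by
  refine List.Nodup.snoc_induction (fun l hfull => ?_) (fun l hl hfull ih => ?_) l hl
  · rw [hL1 l hfull, hL1 _ ((List.forall_mem_map_smul_iff g l).mpr hfull), image_singleton]
  · have hfull' : ¬∀ a, a ∈ l.map (g • ·) :=
      (List.forall_mem_map_smul_iff g l).not.mpr hfull
    calc Labels (l.map (g • ·))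
        = ⋃ v ∈ (g • ·) '' s l, Labels (l.map (g • ·) ++ [v]) := by
          rw [hL2 _ hfull', hequiv g l hl hfull]
      _ = ⋃ u ∈ s l, List.map (g • ·) '' Labels (l ++ [u]) := by
          rw [biUnion_image]
          refine iUnion₂_congr fun u hu => ?_
          rw [← ih u (hdisj l hl hfull u hu), List.map_append, List.map_singleton]
      _ = List.map (g • ·) '' Labels l := by
          rw [hL2 l hfull, image_iUnion₂]

theorem labels_eq_fixingOrbit [Fintype A] (s : List A → Set A)
    (hdisj : ∀ l : List A, l.Nodup → ¬(∀ a : A, a ∈ l) → ∀ u ∈ s l, u ∉ l)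
    (horb : ∀ l : List A, l.Nodup → ¬(∀ a : A, a ∈ l) →
      (s l).Nonempty ∧
      ∀ u ∈ s l, s l = {v | ∃ g : G, (∀ a ∈ l, g • a = a) ∧ v = g • u})
    (hequiv : ∀ (g : G) (l : List A), l.Nodup → ¬(∀ a : A, a ∈ l) →
      s (l.map (fun a => g • a)) = (fun a => g • a) '' s l)
    (Labels : List A → Set (List A))
    (hL1 : ∀ l : List A, (∀ a : A, a ∈ l) → Labels l = {l})
    (hL2 : ∀ l : List A, ¬(∀ a : A, a ∈ l) →
      Labels l = ⋃ u ∈ s l, Labels (l ++ [u]))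
    (l : List A) (hl : l.Nodup) :
    ∃ m : List A, Labels l = fixingOrbit G l m := by
  refine List.Nodup.snoc_induction (fun l hfull => ?_) (fun l hl hfull ih => ?_) l hl
  · exact ⟨l, by rw [hL1 l hfull, fixingOrbit_self l]⟩
  · obtain ⟨⟨u, hu⟩, hsorb⟩ := horb l hl hfull
    have hul : u ∉ l := hdisj l hl hfull u hu
    have hnodup : (l ++ [u]).Nodup := List.concat_eq_append ▸ hl.concat hul
    obtain ⟨m, hm⟩ := ih u hul
    have hs : s l = (· • u) '' pointwiseStabilizer G l := by
      rw [hsorb u hu]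
      ext v
      simp [pointwiseStabilizer, eq_comm]
    refine ⟨m, ?_⟩
    calc Labels l
        = ⋃ g ∈ pointwiseStabilizer G l, Labels ((l ++ [u]).map (g • ·)) := by
          rw [hL2 l hfull, hs, biUnion_image]
          refine iUnion₂_congr fun g hg => ?_
          rw [List.map_append, List.map_smul_eq_self hg, List.map_singleton]
      _ = ⋃ g ∈ pointwiseStabilizer G l, List.map (g • ·) '' fixingOrbit G (l ++ [u]) m := by
          refine iUnion₂_congr fun g _ => ?_
          rw [labels_map_smul s hdisj hequiv Labels hL1 hL2 g _ hnodup, hm]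
      _ = fixingOrbit G l m := biUnion_image_fixingOrbit (List.subset_append_left l [u]) m

end

theorem labels_is_stabilizer_orbit_general {G A : Type*} [Group G]
    [Fintype A] [MulAction G A]
    (s : List A → Set A)
    (hdisj : ∀ l : List A, l.Nodup → ¬(∀ a : A, a ∈ l) → ∀ u ∈ s l, u ∉ l)
    (horb : ∀ l : List A, l.Nodup → ¬(∀ a : A, a ∈ l) →
      (s l).Nonempty ∧
      ∀ u ∈ s l, s l = {v | ∃ g : G, (∀ a ∈ l, g • a = a) ∧ v = g • u})
    (hequiv : ∀ (g : G) (l : List A), l.Nodup → ¬(∀ a : A, a ∈ l) →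
      s (l.map (fun a => g • a)) = (fun a => g • a) '' s l)
    (Labels : List A → Set (List A))
    (hL1 : ∀ l : List A, (∀ a : A, a ∈ l) → Labels l = {l})
    (hL2 : ∀ l : List A, ¬(∀ a : A, a ∈ l) →
      Labels l = ⋃ u ∈ s l, Labels (l ++ [u])) :
    ∀ l : List A, l.Nodup →
      ∃ m : List A, Labels l =
        {m' | ∃ g : G, (∀ a ∈ l, g • a = a) ∧ m' = m.map (fun a => g • a)} :=
  labels_eq_fixingOrbit s hdisj horb hequiv Labels hL1 hL2

/-- Gurevich's labeling lemma.  Let a finite group `G` act on a finite set `A`,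
and let `s` assign to each duplicate-free tuple `ā` over `A` that does not
enumerate all of `A` a set `s ā ⊆ A` disjoint from the entries of `ā`, such
that `s ā` is an orbit of the pointwise stabilizer `G_ā` and `s` is
`G`-equivariant.  Define `Labels ā = {ā}` if `ā` enumerates all of `A`, and
`Labels ā = ⋃_{u ∈ s ā} Labels (ā ++ [u])` otherwise.  Then for every
duplicate-free tuple `ā`, `Labels ā` is an orbit of the pointwise stabilizer
`G_ā` acting coordinatewise on tuples. -/
theorem labels_is_stabilizer_orbit {G A : Type*} [Group G] [Finite G]
    [Fintype A] [MulAction G A]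
    (s : List A → Set A)
    (hdisj : ∀ l : List A, l.Nodup → ¬(∀ a : A, a ∈ l) → ∀ u ∈ s l, u ∉ l)
    (horb : ∀ l : List A, l.Nodup → ¬(∀ a : A, a ∈ l) →
      (s l).Nonempty ∧
      ∀ u ∈ s l, s l = {v | ∃ g : G, (∀ a ∈ l, g • a = a) ∧ v = g • u})
    (hequiv : ∀ (g : G) (l : List A), l.Nodup → ¬(∀ a : A, a ∈ l) →
      s (l.map (fun a => g • a)) = (fun a => g • a) '' s l)
    (Labels : List A → Set (List A))
    (hL1 : ∀ l : List A, (∀ a : A, a ∈ l) → Labels l = {l})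
    (hL2 : ∀ l : List A, ¬(∀ a : A, a ∈ l) →
      Labels l = ⋃ u ∈ s l, Labels (l ++ [u])) :
    ∀ l : List A, l.Nodup →
      ∃ m : List A, Labels l =
        {m' | ∃ g : G, (∀ a ∈ l, g • a = a) ∧ m' = m.map (fun a => g • a)} :=
  labels_is_stabilizer_orbit_general s hdisj horb hequiv Labels hL1 hL2
end
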